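/- With p and q as in the stated setup and α_{N+1} := α_1 + 2π, the rational function ω = (q − ip)/(q + ip) is a Blaschke product of order N; it satisfies ω(e^{iα_n}) = 1 and ω(e^{iβ_n}) = −1 for each n ∈ {1,…,N}; and for every θ with e^{iθ} distinct from all the points e^{iα_n}, e^{iβ_n}, one has (2/π)·Arg((1 + ω(e^{iθ}))/(1 − ω(e^{iθ}))) = 1 if θ (mod 2π) lies in some interval (α_n, β_n) and = −1 if θ (mod 2π) lies in some interval (β_n, α_{n+1}). -/

import Mathlib

open MeasureTheory Complex Real AddCircle
open scoped Real

noncomputable section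

instance : Fact (0 < 2 * π) := ⟨by positivity⟩

abbrev UnitCircle := AddCircle (2 * π)

/-- A Blaschke product of order `n` (a unimodular constant when `n = 0`). -/
def IsBlaschke (n : ℕ) (ω : ℂ → ℂ) : Prop :=
  ∃ (l : ℂ) (z : Fin n → ℂ), ‖l‖ = 1 ∧ (∀ j, ‖z j‖ < 1) ∧
    ∀ w : ℂ, ω w = l * ∏ j, (w - z j) / (1 - (starRingEnd ℂ) (z j) * w)

/-- The polynomial-type function `p(z) = e^{-iα/2} ∏_{n}(z - e^{iα_n})` built from
angles `a 0, …, a (N-1)` (with `α` their sum). -/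
def pFun (N : ℕ) (a : ℕ → ℝ) (z : ℂ) : ℂ :=
  Complex.exp (-Complex.I * ((∑ i ∈ Finset.range N, a i : ℝ) : ℂ) / 2) *
    ∏ i ∈ Finset.range N, (z - Complex.exp (Complex.I * (a i : ℂ)))

open Finset Polynomial ComplexConjugate

/-!
On the unit circle `p(e^{iθ}) = (2i e^{iθ/2})^N ∏ₙ sin((θ - αₙ)/2)`, and likewise for `q`, so `q/p`
is real there and `(1 + ω)/(1 - ω) = -i q/p`: the signs of the two sine products on the arcs give
the argument, and the zeros of `p` and `q` give `ω = ±1`.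

For the Blaschke property, Lagrange interpolation at the zeros `eₘ = e^{iαₘ}` of `p` gives
`q/p = λ + ∑ₘ μₘ (-2i eₘ)/(z - eₘ)`, where interlacing makes every `μₘ` positive. Taking imaginary
parts, `Im(q/p) = Im λ + ∑ₘ μₘ ((1 - |z|²)/|z - eₘ|² + 1)`, and evaluating at the zero `e^{iβ₁}` of
`q` gives `Im λ = -∑ₘ μₘ`. Hence `Im(q/p) ≤ 0` for `|z| ≥ 1` and `λ ≠ i`, so `q - ip` has degree `N`
and all its roots in the open disc. Finally `q + ip = (-1)^N z^N conj((q - ip)(1/z̄))`, which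
splits `ω` into Blaschke factors.
-/

theorem Lagrange.eval_eq_eval_nodal_mul {K ι : Type*} [Field K] [DecidableEq ι] {s : Finset ι}
    {v : ι → K} {x : K} (F : K[X]) (hF : F.natDegree ≤ #s) (hvs : Set.InjOn v s)
    (hx : ∀ i ∈ s, x ≠ v i) :
    F.eval x = (Lagrange.nodal s v).eval x *
      (F.coeff #s + ∑ i ∈ s, Lagrange.nodalWeight s v i * (x - v i)⁻¹ * F.eval (v i)) := by
  set G := F - C (F.coeff #s) * Lagrange.nodal s v
  have hmonic := (Lagrange.nodal_monic (s := s) (v := v)).coeff_natDegree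
  rw [Lagrange.natDegree_nodal] at hmonic
  have hG : G.degree < #s := by
    refine (degree_lt_iff_coeff_zero _ _).2 fun m hm => ?_
    rw [coeff_sub, coeff_C_mul]
    rcases hm.eq_or_lt with rfl | hm
    · rw [hmonic, mul_one, sub_self]
    · have hFm : F.coeff m = 0 := coeff_eq_zero_of_natDegree_lt (hF.trans_lt hm)
      have hnm : (Lagrange.nodal s v).coeff m = 0 :=
        coeff_eq_zero_of_natDegree_lt (by rwa [Lagrange.natDegree_nodal])
      rw [hFm, hnm, mul_zero, sub_zero]
  have hGv : ∀ i ∈ s, G.eval (v i) = F.eval (v i) := fun i hi => by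
    rw [eval_sub, eval_mul, Lagrange.eval_nodal_at_node hi, mul_zero, sub_zero]
  have h := congrArg (eval x) (Lagrange.eq_interpolate_of_eval_eq _ hvs hG hGv)
  rw [Lagrange.eval_interpolate_not_at_node _ hx, eval_sub, eval_mul, eval_C] at h
  linear_combination h

theorem exists_eq_C_leadingCoeff_mul_prod_X_sub_C {n : ℕ} (F : ℂ[X]) (hF : F.natDegree = n) :
    ∃ z : Fin n → ℂ, (∀ j, z j ∈ F.roots) ∧ F = C F.leadingCoeff * ∏ j, (X - C (z j)) := by
  have hlen : F.roots.toList.length = n := by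
    rw [Multiset.length_toList, IsAlgClosed.card_roots_eq_natDegree, hF]
  subst hlen
  refine ⟨fun j => F.roots.toList[j], fun j => Multiset.mem_toList.1 (List.getElem_mem _), ?_⟩
  conv_lhs => rw [← C_leadingCoeff_mul_prod_multiset_X_sub_C (p := F)
    IsAlgClosed.card_roots_eq_natDegree]
  conv_lhs => rw [← Multiset.coe_toList F.roots, Multiset.map_coe, Multiset.prod_coe]
  exact congrArg _ (Fin.prod_univ_fun_getElem _ _).symm

theorem isBlaschke_div_of_roots {n : ℕ} {F G : ℂ[X]} {u : ℂ} (hu : ‖u‖ = 1)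
    (hF : F.natDegree = n) (hF0 : F ≠ 0) (hroots : ∀ z ∈ F.roots, ‖z‖ < 1)
    (hG : ∀ w ≠ 0, G.eval w = u * w ^ n * conj (F.eval (conj w)⁻¹)) :
    IsBlaschke n (fun w => F.eval w / G.eval w) := by
  obtain ⟨z, hz, hFz⟩ := exists_eq_C_leadingCoeff_mul_prod_X_sub_C F hF
  set c := F.leadingCoeff
  have hc : c ≠ 0 := leadingCoeff_ne_zero.2 hF0
  have hFeval : ∀ w, F.eval w = c * ∏ j, (w - z j) := fun w => by
    rw [hFz]; simp [eval_prod]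
  have hGeval : G = C (u * conj c) * ∏ j, (1 - C (conj (z j)) * X) := by
    refine eq_of_infinite_eval_eq _ _ ((Set.finite_singleton 0).infinite_compl.mono ?_)
    intro w hw
    simp only [Set.mem_compl_iff, Set.mem_singleton_iff] at hw
    simp only [Set.mem_ofPred_eq, hG w hw, hFeval, eval_mul, eval_C, eval_prod, eval_sub,
      eval_one, eval_X, map_mul, map_prod, map_sub, map_inv₀, Complex.conj_conj]
    calc u * w ^ n * (conj c * ∏ j, (w⁻¹ - conj (z j)))
        = u * conj c * ∏ j, (w * (w⁻¹ - conj (z j))) := by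
          rw [prod_mul_distrib, prod_const, card_univ, Fintype.card_fin]; ring
      _ = u * conj c * ∏ j, (1 - conj (z j) * w) := by
          simp only [mul_sub, mul_inv_cancel₀ hw, mul_comm w (conj _)]
  refine ⟨c / (u * conj c), z, ?_, fun j => hroots _ (hz j), fun w => ?_⟩
  · rw [norm_div, norm_mul, hu, Complex.norm_conj, one_mul, div_self (norm_ne_zero_iff.2 hc)]
  · simp only [hFeval, hGeval, eval_mul, eval_C, eval_prod, eval_sub, eval_one, eval_X]
    rw [mul_div_mul_comm, prod_div_distrib]

theorem cayley_div_eq_neg_I_mul {p q : ℂ} {r : ℝ} (hp : p ≠ 0) (hqp : q / p = r) :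
    (1 + (q - I * p) / (q + I * p)) / (1 - (q - I * p) / (q + I * p)) = -I * r := by
  have hq : q = r * p := (div_eq_iff hp).1 hqp
  have hrI : (r : ℂ) + I ≠ 0 := fun h0 => by simpa using congrArg Complex.im h0
  rw [hq]
  field_simp
  ring_nf
  rw [Complex.I_sq]
  ring

theorem arg_neg_I_mul_ofReal_of_neg {r : ℝ} (hr : r < 0) : arg (-I * r) = π / 2 := by
  rw [show -I * (r : ℂ) = ((-r : ℝ) : ℂ) * I by push_cast; ring,
    Complex.arg_real_mul _ (neg_pos.2 hr), Complex.arg_I]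

theorem arg_neg_I_mul_ofReal_of_pos {r : ℝ} (hr : 0 < r) : arg (-I * r) = -(π / 2) := by
  rw [show -I * (r : ℂ) = (r : ℂ) * -I by ring, Complex.arg_real_mul _ hr, Complex.arg_neg_I]

theorem im_neg_two_mul_I_mul_div_sub {v z : ℂ} (hv : normSq v = 1) (hzv : z ≠ v) :
    (-2 * I * v / (z - v)).im = (1 - normSq z) / normSq (z - v) + 1 := by
  have hd : normSq (z - v) ≠ 0 := by simpa [Complex.normSq_eq_zero] using sub_ne_zero_of_ne hzv
  have key : -2 * v.re * (z - v).re - 2 * v.im * (z - v).im = 1 - normSq z + normSq (z - v) := by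
    simp only [Complex.normSq_apply, Complex.sub_re, Complex.sub_im] at hv ⊢
    linear_combination hv
  rw [Complex.div_im]
  simp only [Complex.mul_re, Complex.mul_im, Complex.I_re, Complex.I_im, Complex.neg_re,
    Complex.neg_im, Complex.re_ofNat, Complex.im_ofNat]
  field_simp
  linear_combination key

theorem normSq_exp_I_mul (x : ℝ) : normSq (cexp (I * x)) = 1 := by
  rw [mul_comm, Complex.normSq_eq_norm_sq, Complex.norm_exp_ofReal_mul_I, one_pow]

theorem exp_mul_I_eq_exp_add_two_pi_int_mul (θ : ℝ) (k : ℤ) :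
    cexp (θ * I) = cexp (↑(θ + 2 * π * k) * I) := by
  rw [Complex.ofReal_add, add_mul, Complex.exp_add,
    show (↑(2 * π * k) * I : ℂ) = k * (2 * π * I) by push_cast; ring,
    Complex.exp_int_mul_two_pi_mul_I, mul_one]

theorem sin_half_pos_iff {x : ℝ} (hx : |x| < 2 * π) : 0 < Real.sin (x / 2) ↔ 0 < x := by
  rw [abs_lt] at hx
  refine ⟨fun h => ?_, fun h => Real.sin_pos_of_pos_of_lt_pi (by linarith) (by linarith)⟩
  by_contra! h'
  exact h.not_ge (Real.sin_nonpos_of_nonpos_of_neg_pi_le (by linarith) (by linarith))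

theorem sin_half_neg_iff {x : ℝ} (hx : |x| < 2 * π) : Real.sin (x / 2) < 0 ↔ x < 0 := by
  have h := sin_half_pos_iff (x := -x) (by rwa [abs_neg])
  rwa [neg_div, Real.sin_neg, neg_pos, neg_pos] at h

theorem sin_half_mul_sin_half_pos_iff {x y : ℝ} (hx : |x| < 2 * π) (hy : |y| < 2 * π) :
    0 < Real.sin (x / 2) * Real.sin (y / 2) ↔ 0 < x * y := by
  rw [mul_pos_iff, mul_pos_iff, sin_half_pos_iff hx, sin_half_pos_iff hy, sin_half_neg_iff hx,
    sin_half_neg_iff hy]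

theorem abs_sub_lt_of_mem_Ico {t L x y : ℝ} (hx : x ∈ Set.Ico t (t + L))
    (hy : y ∈ Set.Ico t (t + L)) : |x - y| < L := by
  rw [abs_sub_lt_iff]; constructor <;> linarith [hx.1, hx.2, hy.1, hy.2]

theorem eq_of_exp_I_mul_eq {x y : ℝ} (t : ℝ) (hx : x ∈ Set.Ico t (t + 2 * π))
    (hy : y ∈ Set.Ico t (t + 2 * π)) (hxy : cexp (I * x) = cexp (I * y)) : x = y :=
  Circle.exp_injOn_Ico (by linarith) hx hy (Circle.ext (by simpa [mul_comm I] using hxy))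

def sinProd (s : Finset ℕ) (c : ℕ → ℝ) (θ : ℝ) : ℝ := ∏ i ∈ s, Real.sin ((θ - c i) / 2)

def pLead (N : ℕ) (c : ℕ → ℝ) : ℂ := cexp (-I * ((∑ i ∈ range N, c i : ℝ) : ℂ) / 2)

theorem pLead_ne_zero (N : ℕ) (c : ℕ → ℝ) : pLead N c ≠ 0 := Complex.exp_ne_zero _

theorem exp_neg_half_mul_exp_sub_exp (c θ : ℝ) :
    cexp (-I * c / 2) * (cexp (θ * I) - cexp (I * c)) =
      2 * I * cexp (θ / 2 * I) * Real.sin ((θ - c) / 2) := by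
  have hθ : cexp (θ * I) = cexp (θ / 2 * I) ^ 2 := by rw [← Complex.exp_nat_mul]; ring_nf
  have hc : cexp (I * c) = cexp (c / 2 * I) ^ 2 := by rw [← Complex.exp_nat_mul]; ring_nf
  have hc' : cexp (-I * c / 2) = (cexp (c / 2 * I))⁻¹ := by rw [← Complex.exp_neg]; ring_nf
  have hd : cexp ((θ - c) / 2 * I) = cexp (θ / 2 * I) * (cexp (c / 2 * I))⁻¹ := by
    rw [← Complex.exp_neg, ← Complex.exp_add]; ring_nf
  have hd' : cexp (-((θ - c) / 2 * I)) = cexp (c / 2 * I) * (cexp (θ / 2 * I))⁻¹ := by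
    rw [← Complex.exp_neg, ← Complex.exp_add]; ring_nf
  have h1 := Complex.exp_ne_zero (θ / 2 * I)
  have h2 := Complex.exp_ne_zero (c / 2 * I)
  rw [Complex.ofReal_sin, Complex.sin, hθ, hc, hc', Complex.ofReal_div, Complex.ofReal_sub,
    Complex.ofReal_ofNat, neg_mul, hd, hd']
  field_simp
  ring_nf
  rw [Complex.I_sq]
  ring

theorem exp_neg_half_mul_sub_exp_eq_neg_mul_conj (c : ℝ) {w : ℂ} (hw : w ≠ 0) :
    cexp (-I * c / 2) * (w - cexp (I * c)) =
      -w * conj (cexp (-I * c / 2) * ((conj w)⁻¹ - cexp (I * c))) := by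
  have hc : cexp (I * c) = cexp (c / 2 * I) ^ 2 := by rw [← Complex.exp_nat_mul]; ring_nf
  have hc' : cexp (-I * c / 2) = (cexp (c / 2 * I))⁻¹ := by rw [← Complex.exp_neg]; ring_nf
  have hE : conj (cexp (c / 2 * I)) = (cexp (c / 2 * I))⁻¹ := by
    rw [← Complex.exp_conj, ← Complex.exp_neg]; simp [← Complex.ofReal_ofNat, ← Complex.ofReal_div]
  have h2 := Complex.exp_ne_zero (c / 2 * I)
  rw [hc, hc', map_mul, map_sub, map_inv₀, map_inv₀, map_pow, Complex.conj_conj, hE]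
  field_simp
  ring

theorem pFun_eq_prod (N : ℕ) (c : ℕ → ℝ) (z : ℂ) :
    pFun N c z = ∏ i ∈ range N, cexp (-I * c i / 2) * (z - cexp (I * c i)) := by
  rw [pFun, prod_mul_distrib, ← Complex.exp_sum]
  congr 2
  push_cast
  rw [mul_sum, sum_div]

theorem prod_exp_neg_half_mul_exp_sub_exp (s : Finset ℕ) (c : ℕ → ℝ) (θ : ℝ) :
    ∏ i ∈ s, cexp (-I * c i / 2) * (cexp (θ * I) - cexp (I * c i)) =
      (2 * I * cexp (θ / 2 * I)) ^ #s * sinProd s c θ := by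
  simp only [exp_neg_half_mul_exp_sub_exp, prod_mul_distrib, prod_const, sinProd,
    Complex.ofReal_prod, mul_pow]

theorem pFun_exp_mul_I (N : ℕ) (c : ℕ → ℝ) (θ : ℝ) :
    pFun N c (cexp (θ * I)) = (2 * I * cexp (θ / 2 * I)) ^ N * sinProd (range N) c θ := by
  rw [pFun_eq_prod, prod_exp_neg_half_mul_exp_sub_exp, card_range]

theorem pFun_div_pFun_exp_mul_I (N : ℕ) (a b : ℕ → ℝ) (θ : ℝ) :
    pFun N b (cexp (θ * I)) / pFun N a (cexp (θ * I)) =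
      ↑(sinProd (range N) b θ / sinProd (range N) a θ) := by
  have h : (2 * I * cexp (θ / 2 * I)) ^ N ≠ 0 := by simp [Complex.exp_ne_zero]
  rw [pFun_exp_mul_I, pFun_exp_mul_I, mul_div_mul_left _ _ h, Complex.ofReal_div]

theorem cayley_pFun_exp_mul_I {N : ℕ} {a b : ℕ → ℝ} {θ : ℝ} (hP : sinProd (range N) a θ ≠ 0) :
    (1 + (pFun N b (cexp (θ * I)) - I * pFun N a (cexp (θ * I))) /
        (pFun N b (cexp (θ * I)) + I * pFun N a (cexp (θ * I)))) /
      (1 - (pFun N b (cexp (θ * I)) - I * pFun N a (cexp (θ * I))) /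
        (pFun N b (cexp (θ * I)) + I * pFun N a (cexp (θ * I)))) =
      -I * ↑(sinProd (range N) b θ / sinProd (range N) a θ) := by
  refine cayley_div_eq_neg_I_mul ?_ (pFun_div_pFun_exp_mul_I N a b θ)
  rw [pFun_exp_mul_I]
  exact mul_ne_zero (pow_ne_zero _ (by simp [Complex.exp_ne_zero])) (by exact_mod_cast hP)

theorem pFun_eq_zero_iff {N : ℕ} {c : ℕ → ℝ} {z : ℂ} :
    pFun N c z = 0 ↔ ∃ i < N, z = cexp (I * c i) := by
  simp [pFun, Complex.exp_ne_zero, prod_eq_zero_iff, sub_eq_zero]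

theorem pFun_eq_neg_one_pow_mul_conj (N : ℕ) (c : ℕ → ℝ) {w : ℂ} (hw : w ≠ 0) :
    pFun N c w = (-1) ^ N * w ^ N * conj (pFun N c (conj w)⁻¹) := by
  simp only [pFun_eq_prod, map_prod]
  rw [prod_congr rfl fun i _ => exp_neg_half_mul_sub_exp_eq_neg_mul_conj (c i) hw,
    prod_mul_distrib, prod_const, card_range, neg_pow]

def pPoly (N : ℕ) (c : ℕ → ℝ) : ℂ[X] :=
  C (pLead N c) * Lagrange.nodal (range N) (fun i => cexp (I * c i))

theorem eval_pPoly (N : ℕ) (c : ℕ → ℝ) (z : ℂ) : (pPoly N c).eval z = pFun N c z := by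
  rw [pPoly, eval_mul, eval_C, Lagrange.eval_nodal, pFun, pLead]

theorem natDegree_pPoly_le (N : ℕ) (c : ℕ → ℝ) : (pPoly N c).natDegree ≤ N :=
  (natDegree_C_mul_le _ _).trans (by rw [Lagrange.natDegree_nodal, card_range])

theorem coeff_pPoly (N : ℕ) (c : ℕ → ℝ) :
    (pPoly N c).coeff N = pLead N c := by
  have h := (Lagrange.nodal_monic (s := range N) (v := fun i => cexp (I * c i))).coeff_natDegree
  rw [Lagrange.natDegree_nodal, card_range] at h
  rw [pPoly, coeff_C_mul, h, mul_one]

def poleWeight (N : ℕ) (a b : ℕ → ℝ) (m : ℕ) : ℝ :=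
  -(sinProd (range N) b (a m) / sinProd ((range N).erase m) a (a m))

theorem nodalWeight_mul_pFun_div_eq {N : ℕ} {a b : ℕ → ℝ} {m : ℕ} (hm : m < N) :
    Lagrange.nodalWeight (range N) (fun i => cexp (I * a i)) m * pFun N b (cexp (I * a m)) /
        pLead N a = poleWeight N a b m * (-2 * I * cexp (I * a m)) := by
  set E := cexp (a m / 2 * I)
  have hm' : cexp (I * a m) = cexp (a m * I) := by rw [mul_comm]
  have hE2 : cexp (a m * I) = E ^ 2 := by rw [← Complex.exp_nat_mul]; ring_nf
  have hEinv : cexp (-I * a m / 2) = E⁻¹ := by rw [← Complex.exp_neg]; ring_nf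
  have hκ : pLead N a =
      cexp (-I * a m / 2) * ∏ j ∈ (range N).erase m, cexp (-I * a j / 2) := by
    rw [pLead, mul_prod_erase _ (fun j => cexp (-I * a j / 2)) (mem_range.2 hm),
      ← Complex.exp_sum]
    push_cast
    rw [mul_sum, sum_div]
  have hD := prod_exp_neg_half_mul_exp_sub_exp ((range N).erase m) a (a m)
  rw [prod_mul_distrib, card_erase_of_mem (mem_range.2 hm), card_range] at hD
  set Y := (2 * I * E) ^ (N - 1)
  have hY : Y * Y⁻¹ = 1 := mul_inv_cancel₀ (pow_ne_zero _ (by simp [E, Complex.exp_ne_zero]))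
  have hN : (2 * I * E) ^ N = Y * (2 * I * E) := by
    rw [← pow_succ, Nat.sub_add_cancel (by omega)]
  have hswap : ∀ D K X : ℂ, D⁻¹ * X / (E⁻¹ * K) = X * E * (K * D)⁻¹ := fun D K X => by
    rw [div_eq_mul_inv, mul_inv, mul_inv, inv_inv]; ring
  rw [Lagrange.nodalWeight, prod_inv_distrib, hκ, hm', pFun_exp_mul_I, hN, hEinv, hswap, hD, hE2,
    poleWeight]
  push_cast
  linear_combination (2 * I * E ^ 2 * sinProd (range N) b (a m) /
    sinProd ((range N).erase m) a (a m)) * hY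

structure IsInterlacing (N : ℕ) (a b : ℕ → ℝ) : Prop where
  a_lt_b : ∀ i < N, a i < b i
  b_lt_a : ∀ i < N, b i < a (i + 1)
  a_N : a N = a 0 + 2 * π

namespace IsInterlacing

variable {N : ℕ} {a b : ℕ → ℝ}

theorem pos (h : IsInterlacing N a b) : 0 < N := by
  rcases Nat.eq_zero_or_pos N with rfl | hN
  · linarith [h.a_N, Real.pi_pos]
  · exact hN

theorem strictMonoOn_a (h : IsInterlacing N a b) : StrictMonoOn a (Set.Iic N) :=
  strictMonoOn_Iic_of_lt_succ fun m hm => by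
    rw [Order.succ_eq_add_one]; exact (h.a_lt_b m hm).trans (h.b_lt_a m hm)

theorem a_le_a (h : IsInterlacing N a b) {i j : ℕ} (hij : i ≤ j) (hj : j ≤ N) : a i ≤ a j :=
  h.strictMonoOn_a.monotoneOn (hij.trans hj) hj hij

theorem a_lt_b_of_le (h : IsInterlacing N a b) {k n : ℕ} (hkn : k ≤ n) (hn : n < N) : a k < b n :=
  (h.a_le_a hkn hn.le).trans_lt (h.a_lt_b n hn)

theorem b_lt_a_of_lt (h : IsInterlacing N a b) {n k : ℕ} (hnk : n < k) (hk : k ≤ N) : b n < a k :=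
  (h.b_lt_a n (hnk.trans_le hk)).trans_le (h.a_le_a hnk hk)

theorem a_mem_Ico (h : IsInterlacing N a b) {i : ℕ} (hi : i < N) :
    a i ∈ Set.Ico (a 0) (a 0 + 2 * π) :=
  ⟨h.a_le_a (Nat.zero_le i) hi.le,
    h.a_N ▸ h.strictMonoOn_a (Set.mem_Iic.2 hi.le) (Set.mem_Iic.2 le_rfl) hi⟩

theorem b_mem_Ico (h : IsInterlacing N a b) {i : ℕ} (hi : i < N) :
    b i ∈ Set.Ico (a 0) (a 0 + 2 * π) :=
  ⟨(h.a_mem_Ico hi).1.trans (h.a_lt_b i hi).le, h.a_N ▸ h.b_lt_a_of_lt hi le_rfl⟩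

theorem exp_a_ne_exp_b (h : IsInterlacing N a b) {m k : ℕ} (hm : m < N) (hk : k < N) :
    cexp (I * a m) ≠ cexp (I * b k) := fun he => by
  have := eq_of_exp_I_mul_eq _ (h.a_mem_Ico hm) (h.b_mem_Ico hk) he
  rcases le_or_gt m k with hmk | hkm
  · exact (h.a_lt_b_of_le hmk hk).ne this
  · exact (h.b_lt_a_of_lt hkm hm.le).ne' this

theorem injOn_exp_a (h : IsInterlacing N a b) :
    Set.InjOn (fun i => cexp (I * a i)) (range N : Set ℕ) := fun m hm k hk he => by
  simp only [coe_range, Set.mem_Iio] at hm hk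
  exact h.strictMonoOn_a.injOn hm.le hk.le
    (eq_of_exp_I_mul_eq _ (h.a_mem_Ico hm) (h.a_mem_Ico hk) he)

theorem mem_Ico_of_mem_Ico (h : IsInterlacing N a b) {n : ℕ} {θ : ℝ} (hn : n < N)
    (hθ : θ ∈ Set.Ico (a n) (a (n + 1))) : θ ∈ Set.Ico (a 0) (a 0 + 2 * π) :=
  ⟨(h.a_mem_Ico hn).1.trans hθ.1, hθ.2.trans_le (h.a_N ▸ h.a_le_a hn le_rfl)⟩

theorem sub_mul_sub_pos (h : IsInterlacing N a b) {n k : ℕ} {θ : ℝ} (hn : n < N) (hk : k < N)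
    (hkn : k ≠ n) (hθ : θ ∈ Set.Ico (a n) (a (n + 1))) : 0 < (θ - a k) * (θ - b k) := by
  have hab := h.a_lt_b k hk
  rcases hkn.lt_or_gt with hkn | hnk
  · have := h.b_lt_a_of_lt hkn hn.le
    exact mul_pos (by linarith [hθ.1]) (by linarith [hθ.1])
  · have : a (n + 1) ≤ a k := h.a_le_a hnk hk.le
    exact mul_pos_of_neg_of_neg (by linarith [hθ.2]) (by linarith [hθ.2])

theorem sin_mul_sin_pos (h : IsInterlacing N a b) {k : ℕ} {θ : ℝ} (hk : k < N)
    (hθ : θ ∈ Set.Ico (a 0) (a 0 + 2 * π)) (hpos : 0 < (θ - a k) * (θ - b k)) :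
    0 < Real.sin ((θ - a k) / 2) * Real.sin ((θ - b k) / 2) :=
  (sin_half_mul_sin_half_pos_iff (abs_sub_lt_of_mem_Ico hθ (h.a_mem_Ico hk))
    (abs_sub_lt_of_mem_Ico hθ (h.b_mem_Ico hk))).2 hpos

theorem sinProd_mul_sinProd_neg (h : IsInterlacing N a b) {n : ℕ} {θ : ℝ} (hn : n < N)
    (hθ : θ ∈ Set.Ioo (a n) (b n)) : sinProd (range N) a θ * sinProd (range N) b θ < 0 := by
  have hθ' : θ ∈ Set.Ico (a n) (a (n + 1)) := ⟨hθ.1.le, hθ.2.trans (h.b_lt_a n hn)⟩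
  have hW := h.mem_Ico_of_mem_Ico hn hθ'
  rw [sinProd, sinProd, ← prod_mul_distrib, ← mul_prod_erase _ _ (mem_range.2 hn)]
  refine mul_neg_of_neg_of_pos ?_ (prod_pos fun k hk => ?_)
  · exact mul_neg_of_pos_of_neg
      ((sin_half_pos_iff (abs_sub_lt_of_mem_Ico hW (h.a_mem_Ico hn))).2 (sub_pos.2 hθ.1))
      ((sin_half_neg_iff (abs_sub_lt_of_mem_Ico hW (h.b_mem_Ico hn))).2 (sub_neg.2 hθ.2))
  · obtain ⟨hkn, hk⟩ := mem_erase.1 hk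
    exact h.sin_mul_sin_pos (mem_range.1 hk) hW
      (h.sub_mul_sub_pos hn (mem_range.1 hk) hkn hθ')

theorem sinProd_mul_sinProd_pos (h : IsInterlacing N a b) {n : ℕ} {θ : ℝ} (hn : n < N)
    (hθ : θ ∈ Set.Ioo (b n) (a (n + 1))) : 0 < sinProd (range N) a θ * sinProd (range N) b θ := by
  have hθ' : θ ∈ Set.Ico (a n) (a (n + 1)) := ⟨(h.a_lt_b n hn).le.trans hθ.1.le, hθ.2⟩
  rw [sinProd, sinProd, ← prod_mul_distrib]
  refine prod_pos fun k hk => h.sin_mul_sin_pos (mem_range.1 hk) (h.mem_Ico_of_mem_Ico hn hθ') ?_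
  rcases eq_or_ne k n with rfl | hkn
  · exact mul_pos (by linarith [h.a_lt_b k hn, hθ.1]) (by linarith [hθ.1])
  · exact h.sub_mul_sub_pos hn (mem_range.1 hk) hkn hθ'

theorem poleWeight_pos (h : IsInterlacing N a b) {m : ℕ} (hm : m < N) : 0 < poleWeight N a b m := by
  have hθ : a m ∈ Set.Ico (a m) (a (m + 1)) := ⟨le_rfl, (h.a_lt_b m hm).trans (h.b_lt_a m hm)⟩
  have hW := h.a_mem_Ico hm
  have key : sinProd (range N) b (a m) * sinProd ((range N).erase m) a (a m) < 0 := by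
    rw [sinProd, sinProd, ← mul_prod_erase _ _ (mem_range.2 hm), mul_assoc,
      mul_comm (∏ k ∈ _, _), ← prod_mul_distrib]
    refine mul_neg_of_neg_of_pos ?_ (prod_pos fun k hk => ?_)
    · exact (sin_half_neg_iff (abs_sub_lt_of_mem_Ico hW (h.b_mem_Ico hm))).2
        (sub_neg.2 (h.a_lt_b m hm))
    · obtain ⟨hkm, hk⟩ := mem_erase.1 hk
      exact h.sin_mul_sin_pos (mem_range.1 hk) hW
        (h.sub_mul_sub_pos hm (mem_range.1 hk) hkm hθ)
  rw [poleWeight, neg_pos]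
  exact div_neg_iff.2 (mul_neg_iff.1 key)

theorem pFun_div_pFun_eq (h : IsInterlacing N a b) {z : ℂ} (hz : ∀ m < N, z ≠ cexp (I * a m)) :
    pFun N b z / pFun N a z =
      pLead N b / pLead N a +
        ∑ m ∈ range N, poleWeight N a b m * (-2 * I * cexp (I * a m) / (z - cexp (I * a m))) := by
  have hx : ∀ i ∈ range N, z ≠ cexp (I * a i) := fun i hi => hz i (mem_range.1 hi)
  have hq := Lagrange.eval_eq_eval_nodal_mul (pPoly N b)
    ((natDegree_pPoly_le N b).trans_eq (card_range N).symm) h.injOn_exp_a hx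
  simp only [card_range, coeff_pPoly, eval_pPoly] at hq
  rw [hq, ← eval_pPoly, pPoly, eval_mul, eval_C, mul_comm (pLead N a),
    mul_div_mul_left _ _ (Lagrange.eval_nodal_not_at_node hx), add_div, sum_div]
  congr 1
  refine sum_congr rfl fun m hm => ?_
  rw [mul_div_assoc', ← nodalWeight_mul_pFun_div_eq (mem_range.1 hm)]
  ring

theorem im_pFun_div_pFun (h : IsInterlacing N a b) {z : ℂ} (hz : ∀ m < N, z ≠ cexp (I * a m)) :
    (pFun N b z / pFun N a z).im =
      (pLead N b / pLead N a).im +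
        ∑ m ∈ range N, poleWeight N a b m *
          ((1 - normSq z) / normSq (z - cexp (I * a m)) + 1) := by
  rw [h.pFun_div_pFun_eq hz, Complex.add_im, Complex.im_sum]
  refine congrArg _ (sum_congr rfl fun m hm => ?_)
  rw [Complex.im_ofReal_mul,
    im_neg_two_mul_I_mul_div_sub (normSq_exp_I_mul _) (hz m (mem_range.1 hm))]

theorem im_pLead_div_pLead (h : IsInterlacing N a b) :
    (pLead N b / pLead N a).im = -∑ m ∈ range N, poleWeight N a b m := by
  have hb : pFun N b (cexp (I * b 0)) = 0 := pFun_eq_zero_iff.2 ⟨0, h.pos, rfl⟩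
  have hIm := h.im_pFun_div_pFun fun m hm => (h.exp_a_ne_exp_b hm h.pos).symm
  simp only [hb, zero_div, Complex.zero_im, normSq_exp_I_mul, sub_self, zero_add,
    mul_one] at hIm
  linarith

theorem im_pFun_div_pFun_eq_sum (h : IsInterlacing N a b) {z : ℂ}
    (hz : ∀ m < N, z ≠ cexp (I * a m)) :
    (pFun N b z / pFun N a z).im =
      ∑ m ∈ range N, poleWeight N a b m * ((1 - normSq z) / normSq (z - cexp (I * a m))) := by
  rw [h.im_pFun_div_pFun hz, h.im_pLead_div_pLead]
  simp only [mul_add, mul_one, sum_add_distrib]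
  ring

theorem im_pFun_div_pFun_nonpos (h : IsInterlacing N a b) {z : ℂ} (hz1 : 1 ≤ ‖z‖)
    (hz : ∀ m < N, z ≠ cexp (I * a m)) : (pFun N b z / pFun N a z).im ≤ 0 := by
  have hnz : 1 - normSq z ≤ 0 := by rw [Complex.normSq_eq_norm_sq]; nlinarith
  rw [h.im_pFun_div_pFun_eq_sum hz]
  exact sum_nonpos fun m hm => mul_nonpos_of_nonneg_of_nonpos
    (h.poleWeight_pos (mem_range.1 hm)).le (div_nonpos_of_nonpos_of_nonneg hnz (normSq_nonneg _))

theorem pFun_sub_I_mul_pFun_ne_zero (h : IsInterlacing N a b) {z : ℂ} (hz1 : 1 ≤ ‖z‖) :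
    pFun N b z - I * pFun N a z ≠ 0 := by
  intro h0
  by_cases hz : ∃ m < N, z = cexp (I * a m)
  · obtain ⟨m, hm, rfl⟩ := hz
    rw [pFun_eq_zero_iff.2 ⟨m, hm, rfl⟩, mul_zero, sub_zero] at h0
    obtain ⟨k, hk, he⟩ := pFun_eq_zero_iff.1 h0
    exact h.exp_a_ne_exp_b hm hk he
  · replace hz : ∀ m < N, z ≠ cexp (I * a m) := fun m hm he => hz ⟨m, hm, he⟩
    have hp : pFun N a z ≠ 0 := fun hp => by
      obtain ⟨m, hm, he⟩ := pFun_eq_zero_iff.1 hp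
      exact hz m hm he
    have hI : pFun N b z / pFun N a z = I := by
      rw [div_eq_iff hp]; linear_combination h0
    have := h.im_pFun_div_pFun_nonpos hz1 hz
    rw [hI, Complex.I_im] at this
    linarith

theorem pLead_sub_I_mul_pLead_ne_zero (h : IsInterlacing N a b) :
    pLead N b - I * pLead N a ≠ 0 := by
  intro h0
  have hI : pLead N b / pLead N a = I := by
    rw [div_eq_iff (pLead_ne_zero N a)]; linear_combination h0
  have hIm := h.im_pLead_div_pLead
  have hμ := sum_nonneg fun m hm => (h.poleWeight_pos (mem_range.1 hm)).le
  rw [hI, Complex.I_im] at hIm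
  linarith

theorem isBlaschke (h : IsInterlacing N a b) :
    IsBlaschke N (fun z => (pFun N b z - I * pFun N a z) / (pFun N b z + I * pFun N a z)) := by
  set F := pPoly N b - C I * pPoly N a
  have hcoeff : F.coeff N = pLead N b - I * pLead N a := by
    rw [coeff_sub, coeff_C_mul, coeff_pPoly, coeff_pPoly]
  have hdeg : F.natDegree = N :=
    natDegree_eq_of_le_of_coeff_ne_zero ((natDegree_sub_le_of_le (natDegree_pPoly_le N b)
      ((natDegree_C_mul_le _ _).trans (natDegree_pPoly_le N a))).trans_eq (max_self N))
      (hcoeff ▸ h.pLead_sub_I_mul_pLead_ne_zero)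
  have hF0 : F ≠ 0 := fun h0 => h.pLead_sub_I_mul_pLead_ne_zero (by rw [← hcoeff, h0, coeff_zero])
  have hroots : ∀ z ∈ F.roots, ‖z‖ < 1 := fun z hz => by
    by_contra! hz1
    refine h.pFun_sub_I_mul_pFun_ne_zero hz1 ?_
    simpa [F, eval_pPoly] using (mem_roots hF0).1 hz
  have hG : ∀ w ≠ 0, (pPoly N b + C I * pPoly N a).eval w =
      (-1) ^ N * w ^ N * conj (F.eval (conj w)⁻¹) := fun w hw => by
    simp only [F, eval_add, eval_sub, eval_mul, eval_C, eval_pPoly, map_sub, map_mul,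
      Complex.conj_I]
    rw [pFun_eq_neg_one_pow_mul_conj N a hw, pFun_eq_neg_one_pow_mul_conj N b hw]
    ring
  simpa [F, eval_pPoly] using isBlaschke_div_of_roots (by simp) hdeg hF0 hroots hG

theorem cayley_exp_a_eq_one (h : IsInterlacing N a b) {n : ℕ} (hn : n < N) :
    (pFun N b (cexp (a n * I)) - I * pFun N a (cexp (a n * I))) /
      (pFun N b (cexp (a n * I)) + I * pFun N a (cexp (a n * I))) = 1 := by
  have hq : pFun N b (cexp (a n * I)) ≠ 0 := fun hq => by
    obtain ⟨k, hk, he⟩ := pFun_eq_zero_iff.1 hq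
    exact h.exp_a_ne_exp_b hn hk (by rw [← he, mul_comm])
  rw [pFun_eq_zero_iff (c := a).2 ⟨n, hn, by rw [mul_comm]⟩, mul_zero, sub_zero, add_zero,
    div_self hq]

theorem cayley_exp_b_eq_neg_one (h : IsInterlacing N a b) {n : ℕ} (hn : n < N) :
    (pFun N b (cexp (b n * I)) - I * pFun N a (cexp (b n * I))) /
      (pFun N b (cexp (b n * I)) + I * pFun N a (cexp (b n * I))) = -1 := by
  have hp : pFun N a (cexp (b n * I)) ≠ 0 := fun hp => by
    obtain ⟨k, hk, he⟩ := pFun_eq_zero_iff.1 hp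
    exact h.exp_a_ne_exp_b hk hn (by rw [← he, mul_comm])
  rw [pFun_eq_zero_iff (c := b).2 ⟨n, hn, by rw [mul_comm]⟩, zero_sub, zero_add, neg_div,
    div_self (mul_ne_zero I_ne_zero hp)]

theorem two_div_pi_mul_arg_eq_one (h : IsInterlacing N a b) {θ : ℝ} {n : ℕ} {k : ℤ} (hn : n < N)
    (hθ : θ + 2 * π * k ∈ Set.Ioo (a n) (b n)) :
    2 / π * arg ((1 + (pFun N b (cexp (θ * I)) - I * pFun N a (cexp (θ * I))) /
        (pFun N b (cexp (θ * I)) + I * pFun N a (cexp (θ * I)))) /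
      (1 - (pFun N b (cexp (θ * I)) - I * pFun N a (cexp (θ * I))) /
        (pFun N b (cexp (θ * I)) + I * pFun N a (cexp (θ * I))))) = 1 := by
  have hPQ := h.sinProd_mul_sinProd_neg hn hθ
  rw [exp_mul_I_eq_exp_add_two_pi_int_mul θ k, cayley_pFun_exp_mul_I (left_ne_zero_of_mul hPQ.ne),
    arg_neg_I_mul_ofReal_of_neg (div_neg_iff.2 (mul_neg_iff.1 (by rwa [mul_comm] at hPQ)))]
  field_simp

theorem two_div_pi_mul_arg_eq_neg_one (h : IsInterlacing N a b) {θ : ℝ} {n : ℕ} {k : ℤ}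
    (hn : n < N) (hθ : θ + 2 * π * k ∈ Set.Ioo (b n) (a (n + 1))) :
    2 / π * arg ((1 + (pFun N b (cexp (θ * I)) - I * pFun N a (cexp (θ * I))) /
        (pFun N b (cexp (θ * I)) + I * pFun N a (cexp (θ * I)))) /
      (1 - (pFun N b (cexp (θ * I)) - I * pFun N a (cexp (θ * I))) /
        (pFun N b (cexp (θ * I)) + I * pFun N a (cexp (θ * I))))) = -1 := by
  have hPQ := h.sinProd_mul_sinProd_pos hn hθ
  rw [exp_mul_I_eq_exp_add_two_pi_int_mul θ k, cayley_pFun_exp_mul_I (left_ne_zero_of_mul hPQ.ne'),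
    arg_neg_I_mul_ofReal_of_pos (div_pos_iff.2 (mul_pos_iff.1 (by rwa [mul_comm] at hPQ)))]
  field_simp

end IsInterlacing

theorem stmt10_general (N : ℕ) (a b : ℕ → ℝ)
    (hab : ∀ i < N, a i < b i) (hba : ∀ i < N, b i < a (i + 1))
    (haN : a N = a 0 + 2 * π) :
    IsBlaschke N (fun z : ℂ =>
      (pFun N b z - Complex.I * pFun N a z) / (pFun N b z + Complex.I * pFun N a z)) ∧
    (∀ n < N,
      (pFun N b (Complex.exp ((a n : ℂ) * Complex.I)) -
          Complex.I * pFun N a (Complex.exp ((a n : ℂ) * Complex.I))) /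
        (pFun N b (Complex.exp ((a n : ℂ) * Complex.I)) +
          Complex.I * pFun N a (Complex.exp ((a n : ℂ) * Complex.I))) = 1 ∧
      (pFun N b (Complex.exp ((b n : ℂ) * Complex.I)) -
          Complex.I * pFun N a (Complex.exp ((b n : ℂ) * Complex.I))) /
        (pFun N b (Complex.exp ((b n : ℂ) * Complex.I)) +
          Complex.I * pFun N a (Complex.exp ((b n : ℂ) * Complex.I))) = -1) ∧
    ∀ θ : ℝ,
      (∀ n < N, Complex.exp (θ * Complex.I) ≠ Complex.exp ((a n : ℂ) * Complex.I) ∧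
        Complex.exp (θ * Complex.I) ≠ Complex.exp ((b n : ℂ) * Complex.I)) →
      ((∃ n < N, ∃ k : ℤ, θ + 2 * π * k ∈ Set.Ioo (a n) (b n)) →
        (2 / π) * ((1 + (pFun N b (Complex.exp (θ * Complex.I)) -
            Complex.I * pFun N a (Complex.exp (θ * Complex.I))) /
          (pFun N b (Complex.exp (θ * Complex.I)) +
            Complex.I * pFun N a (Complex.exp (θ * Complex.I)))) /
          (1 - (pFun N b (Complex.exp (θ * Complex.I)) -
            Complex.I * pFun N a (Complex.exp (θ * Complex.I))) /
          (pFun N b (Complex.exp (θ * Complex.I)) +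
            Complex.I * pFun N a (Complex.exp (θ * Complex.I))))).arg = 1) ∧
      ((∃ n < N, ∃ k : ℤ, θ + 2 * π * k ∈ Set.Ioo (b n) (a (n + 1))) →
        (2 / π) * ((1 + (pFun N b (Complex.exp (θ * Complex.I)) -
            Complex.I * pFun N a (Complex.exp (θ * Complex.I))) /
          (pFun N b (Complex.exp (θ * Complex.I)) +
            Complex.I * pFun N a (Complex.exp (θ * Complex.I)))) /
          (1 - (pFun N b (Complex.exp (θ * Complex.I)) -
            Complex.I * pFun N a (Complex.exp (θ * Complex.I))) /
          (pFun N b (Complex.exp (θ * Complex.I)) +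
            Complex.I * pFun N a (Complex.exp (θ * Complex.I))))).arg = -1) := by
  have h : IsInterlacing N a b := ⟨hab, hba, haN⟩
  refine ⟨h.isBlaschke, fun n hn => ⟨h.cayley_exp_a_eq_one hn, h.cayley_exp_b_eq_neg_one hn⟩,
    fun θ _ => ⟨?_, ?_⟩⟩
  · rintro ⟨n, hn, k, hk⟩
    exact h.two_div_pi_mul_arg_eq_one hn hk
  · rintro ⟨n, hn, k, hk⟩
    exact h.two_div_pi_mul_arg_eq_neg_one hn hk

/-- The function `ω = (q - ip)/(q + ip)` is a Blaschke product of order `N`, takes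
the value `1` at each `e^{iα_n}` and `-1` at each `e^{iβ_n}`, and
`(2/π)·Arg((1+ω)/(1-ω))` equals `1` on the arcs `(α_n, β_n)` and `-1` on the arcs
`(β_n, α_{n+1})` (with `α_{N+1} := α_1 + 2π`, encoded by `a N = a 0 + 2π`). -/
theorem stmt10 (N : ℕ) (hN : 1 ≤ N) (a b : ℕ → ℝ) (ha0 : 0 ≤ a 0)
    (hab : ∀ i < N, a i < b i) (hba : ∀ i < N, b i < a (i + 1))
    (haN : a N = a 0 + 2 * π) :
    IsBlaschke N (fun z : ℂ =>
      (pFun N b z - Complex.I * pFun N a z) / (pFun N b z + Complex.I * pFun N a z)) ∧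
    (∀ n < N,
      (pFun N b (Complex.exp ((a n : ℂ) * Complex.I)) -
          Complex.I * pFun N a (Complex.exp ((a n : ℂ) * Complex.I))) /
        (pFun N b (Complex.exp ((a n : ℂ) * Complex.I)) +
          Complex.I * pFun N a (Complex.exp ((a n : ℂ) * Complex.I))) = 1 ∧
      (pFun N b (Complex.exp ((b n : ℂ) * Complex.I)) -
          Complex.I * pFun N a (Complex.exp ((b n : ℂ) * Complex.I))) /
        (pFun N b (Complex.exp ((b n : ℂ) * Complex.I)) +
          Complex.I * pFun N a (Complex.exp ((b n : ℂ) * Complex.I))) = -1) ∧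
    ∀ θ : ℝ,
      (∀ n < N, Complex.exp (θ * Complex.I) ≠ Complex.exp ((a n : ℂ) * Complex.I) ∧
        Complex.exp (θ * Complex.I) ≠ Complex.exp ((b n : ℂ) * Complex.I)) →
      ((∃ n < N, ∃ k : ℤ, θ + 2 * π * k ∈ Set.Ioo (a n) (b n)) →
        (2 / π) * ((1 + (pFun N b (Complex.exp (θ * Complex.I)) -
            Complex.I * pFun N a (Complex.exp (θ * Complex.I))) /
          (pFun N b (Complex.exp (θ * Complex.I)) +
            Complex.I * pFun N a (Complex.exp (θ * Complex.I)))) /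
          (1 - (pFun N b (Complex.exp (θ * Complex.I)) -
            Complex.I * pFun N a (Complex.exp (θ * Complex.I))) /
          (pFun N b (Complex.exp (θ * Complex.I)) +
            Complex.I * pFun N a (Complex.exp (θ * Complex.I))))).arg = 1) ∧
      ((∃ n < N, ∃ k : ℤ, θ + 2 * π * k ∈ Set.Ioo (b n) (a (n + 1))) →
        (2 / π) * ((1 + (pFun N b (Complex.exp (θ * Complex.I)) -
            Complex.I * pFun N a (Complex.exp (θ * Complex.I))) /
          (pFun N b (Complex.exp (θ * Complex.I)) +
            Complex.I * pFun N a (Complex.exp (θ * Complex.I)))) /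
          (1 - (pFun N b (Complex.exp (θ * Complex.I)) -
            Complex.I * pFun N a (Complex.exp (θ * Complex.I))) /
          (pFun N b (Complex.exp (θ * Complex.I)) +
            Complex.I * pFun N a (Complex.exp (θ * Complex.I))))).arg = -1) :=
  stmt10_general N a b hab hba haN
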